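/- Let W1 and W2 be B-DMCs with finite output alphabets Y1 and Y2, and let (W⁻, W⁺) be their irregular kernel transform. Then Z(W⁻) ≤ Z(W1) + Z(W2) − Z(W1)·Z(W2). -/

import Mathlib

open Finset Real

/-- A binary-input discrete memoryless channel (B-DMC): nonnegative entries
and each row (fixed input) sums to 1. -/
def IsBDMC {Y : Type*} [Fintype Y] (W : Y → ZMod 2 → ℝ) : Prop :=
  (∀ y x, 0 ≤ W y x) ∧ (∀ x, ∑ y, W y x = 1)

/-- Bhattacharyya parameter Z(W). -/
noncomputable def bhatt {Y : Type*} [Fintype Y] (W : Y → ZMod 2 → ℝ) : ℝ :=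
  ∑ y, Real.sqrt (W y 0 * W y 1)

/-- The minus-channel W⁻ of the irregular kernel transform. -/
noncomputable def Wminus {Y1 Y2 : Type*} (W1 : Y1 → ZMod 2 → ℝ)
    (W2 : Y2 → ZMod 2 → ℝ) : Y1 × Y2 → ZMod 2 → ℝ :=
  fun y u1 => ∑ u2 : ZMod 2, (1 / 2) * W1 y.1 (u1 + u2) * W2 y.2 u2

/-! For an output pair with transition probabilities `a, b` (of `W1`) and `c, d` (of `W2`),
`√(W⁻(y|0) W⁻(y|1)) = ½ √((ac + bd)(bc + ad))`. With `p = √(ab)`, `q = √(cd)` this is at most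
`½ (p (c + d) + q (a + b) - 2pq)`, because the difference of the squares is
`2pq (a + b - 2p)(c + d - 2q) ≥ 0` by AM-GM. Summing over all outputs and using
`∑ (a + b) = ∑ (c + d) = 2` turns the right-hand side into `Z(W1) + Z(W2) - Z(W1) Z(W2)`. -/

lemma two_sqrt_mul_le_add {a b : ℝ} (ha : 0 ≤ a) (hb : 0 ≤ b) : 2 * √(a * b) ≤ a + b := by
  nlinarith [Real.sq_sqrt (mul_nonneg ha hb), Real.sqrt_nonneg (a * b), sq_nonneg (a - b)]

lemma sqrt_mul_add_mul_le {a b c d : ℝ} (ha : 0 ≤ a) (hb : 0 ≤ b) (hc : 0 ≤ c) (hd : 0 ≤ d) :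
    √((a * c + b * d) * (b * c + a * d)) ≤
      √(a * b) * (c + d) + √(c * d) * (a + b) - 2 * √(a * b) * √(c * d) := by
  set p := √(a * b)
  set q := √(c * d)
  have hp : p ^ 2 = a * b := Real.sq_sqrt (mul_nonneg ha hb)
  have hq : q ^ 2 = c * d := Real.sq_sqrt (mul_nonneg hc hd)
  have hab : 0 ≤ a + b - 2 * p := sub_nonneg.2 (two_sqrt_mul_le_add ha hb)
  have hcd : 0 ≤ c + d - 2 * q := sub_nonneg.2 (two_sqrt_mul_le_add hc hd)
  have hp0 : 0 ≤ p := Real.sqrt_nonneg _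
  have hq0 : 0 ≤ q := Real.sqrt_nonneg _
  have gap : (p * (c + d) + q * (a + b) - 2 * p * q) ^ 2 - (a * c + b * d) * (b * c + a * d)
      = 2 * p * q * (a + b - 2 * p) * (c + d - 2 * q) := by
    linear_combination ((c + d) ^ 2 - 4 * q ^ 2) * hp + ((a + b) ^ 2 - 4 * a * b) * hq
  rw [Real.sqrt_le_iff]
  constructor
  · nlinarith [mul_nonneg hp0 hcd, mul_nonneg hq0 (add_nonneg ha hb)]
  · nlinarith [mul_nonneg (mul_nonneg hp0 hq0) (mul_nonneg hab hcd)]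

lemma Wminus_apply {Y1 Y2 : Type*} (W1 : Y1 → ZMod 2 → ℝ) (W2 : Y2 → ZMod 2 → ℝ)
    (y : Y1 × Y2) (u : ZMod 2) :
    Wminus W1 W2 y u = (W1 y.1 u * W2 y.2 0 + W1 y.1 (u + 1) * W2 y.2 1) / 2 := by
  have huniv : (Finset.univ : Finset (ZMod 2)) = {0, 1} := rfl
  rw [Wminus, huniv, Finset.sum_pair zero_ne_one, add_zero]
  ring

lemma IsBDMC.sum_add {Y : Type*} [Fintype Y] {W : Y → ZMod 2 → ℝ} (hW : IsBDMC W) :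
    ∑ y, (W y 0 + W y 1) = 2 := by
  rw [Finset.sum_add_distrib, hW.2, hW.2]; norm_num

lemma sqrt_Wminus_mul_le {Y1 Y2 : Type*} {W1 : Y1 → ZMod 2 → ℝ} {W2 : Y2 → ZMod 2 → ℝ}
    (h1 : ∀ y x, 0 ≤ W1 y x) (h2 : ∀ y x, 0 ≤ W2 y x) (y : Y1 × Y2) :
    √(Wminus W1 W2 y 0 * Wminus W1 W2 y 1) ≤
      (√(W1 y.1 0 * W1 y.1 1) * (W2 y.2 0 + W2 y.2 1)
        + √(W2 y.2 0 * W2 y.2 1) * (W1 y.1 0 + W1 y.1 1)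
        - 2 * √(W1 y.1 0 * W1 y.1 1) * √(W2 y.2 0 * W2 y.2 1)) / 2 := by
  have h11 : (1 : ZMod 2) + 1 = 0 := rfl
  rw [Wminus_apply, Wminus_apply, zero_add, h11, div_mul_div_comm,
    Real.sqrt_div' _ (by norm_num : (0 : ℝ) ≤ 2 * 2), show (2 : ℝ) * 2 = 2 ^ 2 by norm_num,
    Real.sqrt_sq zero_le_two]
  gcongr
  exact sqrt_mul_add_mul_le (h1 _ _) (h1 _ _) (h2 _ _) (h2 _ _)

/-- Z(W⁻) ≤ Z(W1) + Z(W2) − Z(W1)·Z(W2). -/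
theorem bhatt_Wminus_le {Y1 Y2 : Type*} [Fintype Y1] [Fintype Y2]
    (W1 : Y1 → ZMod 2 → ℝ) (W2 : Y2 → ZMod 2 → ℝ)
    (h1 : IsBDMC W1) (h2 : IsBDMC W2) :
    bhatt (Wminus W1 W2) ≤ bhatt W1 + bhatt W2 - bhatt W1 * bhatt W2 := by
  calc bhatt (Wminus W1 W2)
      ≤ ∑ y : Y1 × Y2, (√(W1 y.1 0 * W1 y.1 1) * (W2 y.2 0 + W2 y.2 1)
          + √(W2 y.2 0 * W2 y.2 1) * (W1 y.1 0 + W1 y.1 1)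
          - 2 * √(W1 y.1 0 * W1 y.1 1) * √(W2 y.2 0 * W2 y.2 1)) / 2 :=
        Finset.sum_le_sum fun y _ => sqrt_Wminus_mul_le h1.1 h2.1 y
    _ = (bhatt W1 * ∑ y, (W2 y 0 + W2 y 1) + (∑ y, (W1 y 0 + W1 y 1)) * bhatt W2
          - 2 * (bhatt W1 * bhatt W2)) / 2 := by
        simp only [bhatt]
        rw [Fintype.sum_mul_sum, Fintype.sum_mul_sum, Fintype.sum_mul_sum, ← Fintype.sum_prod_type',
          ← Fintype.sum_prod_type', ← Fintype.sum_prod_type', Finset.mul_sum,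
          ← Finset.sum_add_distrib, ← Finset.sum_sub_distrib, Finset.sum_div]
        exact Finset.sum_congr rfl fun y _ => by ring
    _ = bhatt W1 + bhatt W2 - bhatt W1 * bhatt W2 := by
        rw [h1.sum_add, h2.sum_add]; ring
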